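/- arXiv:2209.13862 — 5 statements merged into one kernel-verified Lean document; each statement's English description precedes it below -/
import Mathlib

section
/- Let P_{XY} be a joint pmf on finite alphabets 𝒳×𝒴 with P_X(x)>0 for every x∈𝒳, and let g:[0,1]→[0,∞) be any gain function. For every finite alphabet 𝒰 and every channel P_{U|X} from 𝒳 to 𝒰 (defining the Markov chain U−X−Y via P_{UXY}(u,x,y)=P_{U|X}(u|x)P_{XY}(x,y)), one has sup over families of pmfs (P̂_y)_{y∈𝒴} on 𝒰 of Σ_{u,y} P_{UY}(u,y)·g(P̂_y(u)) ≤ (Σ_{y∈𝒴} max_{x∈𝒳} P_{Y|X}(y|x)) · (sup over pmfs P̂ on 𝒰 of Σ_u P_U(u)·g(P̂(u))). Consequently the maximal g-leakage L_g^max(X→Y) is at most log Σ_{y∈𝒴} max_{x∈𝒳} P_{Y|X}(y|x). -/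
open Finset

/-- A probability mass function on a finite type. -/
def IsPMF {α : Type*} [Fintype α] (p : α → ℝ) : Prop :=
  (∀ a, 0 ≤ p a) ∧ ∑ a, p a = 1

/-- A channel (row-stochastic kernel). -/
def IsChannel {X U : Type*} [Fintype U] (K : X → U → ℝ) : Prop :=
  ∀ x, IsPMF (K x)

/-!
Write `P_X(x) = ∑_y P(x, y)` and `M_y = max_x P(y|x)`. Since `P(x, y) ≤ M_y P_X(x)`, for every `u`
the joint weight `P_{UY}(u, y)` is at most `M_y P_U(u)`. Hence, for each `y`, the posterior gain
of the guess `P̂_y` is at most `M_y` times the prior gain of the same guess `P̂_y`, which is bounded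
by the prior supremum; summing over `y` gives the factor `∑_y M_y`. This factor is at least `1`
(compare it with `∑_y P(y|x)` for a single `x`), which covers the degenerate cases of the ratio
of suprema.
-/

lemma IsPMF.mem_Icc {α : Type*} [Fintype α] {p : α → ℝ} (hp : IsPMF p) (a : α) :
    p a ∈ Set.Icc (0 : ℝ) 1 :=
  ⟨hp.1 a, hp.2 ▸ single_le_sum (fun b _ => hp.1 b) (mem_univ a)⟩

lemma sum_mul_le_mul_sum_mul {ι : Type*} (s : Finset ι) {a b w : ι → ℝ} {M : ℝ}
    (hab : ∀ i ∈ s, a i ≤ M * b i) (hw : ∀ i ∈ s, 0 ≤ w i) :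
    ∑ i ∈ s, a i * w i ≤ M * ∑ i ∈ s, b i * w i := by
  rw [mul_sum]
  refine sum_le_sum fun i hi => ?_
  rw [← mul_assoc]
  exact mul_le_mul_of_nonneg_right (hab i hi) (hw i hi)

lemma Real.log_sSup_div_sSup_le {N D : Set ℝ} {S : ℝ} (hN : ∀ n ∈ N, 0 ≤ n)
    (hD : ∀ d ∈ D, 0 ≤ d) (hS : 1 ≤ S) (h : ∀ c, (∀ d ∈ D, d ≤ c) → ∀ n ∈ N, n ≤ S * c) :
    Real.log (sSup N / sSup D) ≤ Real.log S := by
  have hratio : sSup N / sSup D ≤ S := by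
    rcases (Real.sSup_nonneg hD).eq_or_lt with hD0 | hDpos
    · rw [← hD0, div_zero]
      linarith
    have hbdd : BddAbove D := by
      by_contra hunbdd
      rw [Real.sSup_of_not_bddAbove hunbdd] at hDpos
      exact hDpos.false
    rw [div_le_iff₀ hDpos]
    exact Real.sSup_le (h _ fun d hd => le_csSup hbdd hd) (mul_nonneg (by linarith) hDpos.le)
  rcases (div_nonneg (Real.sSup_nonneg hN) (Real.sSup_nonneg hD)).eq_or_lt with h0 | hpos
  · rw [← h0, Real.log_zero]
    exact Real.log_nonneg hS
  · exact Real.log_le_log hpos hratio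

section Leakage

variable {X Y U : Type*} [Fintype X] [Fintype Y] [Nonempty X]
  {P : X → Y → ℝ}

lemma le_sup'_cond_mul_marginal (hPX : ∀ x, 0 < ∑ y, P x y) (x : X) (y : Y) :
    P x y ≤ univ.sup' univ_nonempty (fun x => P x y / ∑ y', P x y') * ∑ y', P x y' :=
  (div_le_iff₀ (hPX x)).1 (le_sup' (fun x => P x y / ∑ y', P x y') (mem_univ x))

lemma one_le_sum_sup'_cond (hPX : ∀ x, 0 < ∑ y, P x y) :
    1 ≤ ∑ y, univ.sup' univ_nonempty (fun x => P x y / ∑ y', P x y') := by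
  obtain ⟨x⟩ := ‹Nonempty X›
  calc (1 : ℝ) = ∑ y, P x y / ∑ y', P x y' := by rw [← sum_div, div_self (hPX x).ne']
    _ ≤ _ := sum_le_sum fun y _ =>
      le_sup' (fun x => P x y / ∑ y', P x y') (mem_univ x)

lemma joint_le_sup'_cond_mul_output (hPX : ∀ x, 0 < ∑ y, P x y) {K : X → U → ℝ}
    (hK : ∀ x u, 0 ≤ K x u) (u : U) (y : Y) :
    ∑ x, K x u * P x y ≤
      univ.sup' univ_nonempty (fun x => P x y / ∑ y', P x y') * ∑ x, (∑ y', P x y') * K x u := by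
  simp only [mul_comm (K _ u)]
  exact sum_mul_le_mul_sum_mul _ (fun x _ => le_sup'_cond_mul_marginal hPX x y)
    (fun x _ => hK x u)

lemma posterior_gain_le_of_prior_gain_le [Fintype U] (hPX : ∀ x, 0 < ∑ y, P x y)
    {g : ℝ → ℝ} (hg : ∀ t ∈ Set.Icc (0:ℝ) 1, 0 ≤ g t)
    {K : X → U → ℝ} (hK : ∀ x u, 0 ≤ K x u) (hP : ∀ x y, 0 ≤ P x y) (c : ℝ)
    (hc : ∀ Ph : U → ℝ, IsPMF Ph → ∑ u, (∑ x, (∑ y, P x y) * K x u) * g (Ph u) ≤ c)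
    (Ph : Y → U → ℝ) (hPh : ∀ y, IsPMF (Ph y)) :
    ∑ y, ∑ u, (∑ x, K x u * P x y) * g (Ph y u) ≤
      (∑ y, univ.sup' univ_nonempty (fun x => P x y / ∑ y', P x y')) * c := by
  rw [sum_mul]
  refine sum_le_sum fun y _ => ?_
  have hM : 0 ≤ univ.sup' univ_nonempty (fun x => P x y / ∑ y', P x y') := by
    obtain ⟨x⟩ := ‹Nonempty X›
    exact (div_nonneg (hP x y) (hPX x).le).trans
      (le_sup' (fun x => P x y / ∑ y', P x y') (mem_univ x))
  calc ∑ u, (∑ x, K x u * P x y) * g (Ph y u)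
      ≤ univ.sup' univ_nonempty (fun x => P x y / ∑ y', P x y') *
          ∑ u, (∑ x, (∑ y', P x y') * K x u) * g (Ph y u) :=
        sum_mul_le_mul_sum_mul _ (fun u _ => joint_le_sup'_cond_mul_output hPX hK u y)
          (fun u _ => hg _ ((hPh y).mem_Icc u))
    _ ≤ _ := mul_le_mul_of_nonneg_left (hc (Ph y) (hPh y)) hM

end Leakage

/-- For any nonnegative gain function `g`, any finite alphabet `U` and any
channel `K = P_{U|X}`, the supremum over families of guessing pmfs of the "posterior" expected
gain is at most `(∑_y max_x P_{Y|X}(y|x))` times the supremum over guessing pmfs of the "prior"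
expected gain (phrased via upper-bound transfer, which is exactly
`sup Num ≤ (∑_y max_x P_{Y|X}(y|x)) · sup Den` in the extended sense); consequently the maximal
`g`-leakage is at most `log ∑_y max_x P_{Y|X}(y|x)`. -/
theorem stmt0 {X Y U : Type} [Fintype X] [Fintype Y] [Fintype U] [Nonempty X]
    (P : X → Y → ℝ) (hP : IsPMF (fun z : X × Y => P z.1 z.2))
    (hPX : ∀ x, 0 < ∑ y, P x y)
    (g : ℝ → ℝ) (hg : ∀ t ∈ Set.Icc (0:ℝ) 1, 0 ≤ g t)
    (K : X → U → ℝ) (hK : IsChannel K) :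
    (∀ c : ℝ,
      (∀ Ph : U → ℝ, IsPMF Ph →
        ∑ u, (∑ x, (∑ y, P x y) * K x u) * g (Ph u) ≤ c) →
      ∀ Ph : Y → U → ℝ, (∀ y, IsPMF (Ph y)) →
        ∑ y, ∑ u, (∑ x, K x u * P x y) * g (Ph y u) ≤
          (∑ y, Finset.univ.sup' Finset.univ_nonempty
            (fun x => P x y / ∑ y', P x y')) * c)
    ∧
    Real.log
        (sSup {w : ℝ | ∃ Ph : Y → U → ℝ, (∀ y, IsPMF (Ph y)) ∧
            w = ∑ y, ∑ u, (∑ x, K x u * P x y) * g (Ph y u)} /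
          sSup {v : ℝ | ∃ Ph : U → ℝ, IsPMF Ph ∧
            v = ∑ u, (∑ x, (∑ y, P x y) * K x u) * g (Ph u)})
      ≤ Real.log (∑ y, Finset.univ.sup' Finset.univ_nonempty
          (fun x => P x y / ∑ y', P x y')) := by
  have hPnn : ∀ x y, 0 ≤ P x y := fun x y => hP.1 (x, y)
  have hKnn : ∀ x u, 0 ≤ K x u := fun x u => (hK x).1 u
  have hgain : ∀ Ph : U → ℝ, IsPMF Ph → ∀ u, 0 ≤ g (Ph u) := fun Ph hPh u => hg _ (hPh.mem_Icc u)
  have transfer := posterior_gain_le_of_prior_gain_le hPX hg hKnn hPnn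
  refine ⟨transfer, Real.log_sSup_div_sSup_le ?_ ?_ (one_le_sum_sup'_cond hPX) ?_⟩
  · rintro _ ⟨Ph, hPh, rfl⟩
    exact sum_nonneg fun y _ => sum_nonneg fun u _ =>
      mul_nonneg (sum_nonneg fun x _ => mul_nonneg (hKnn x u) (hPnn x y)) (hgain _ (hPh y) u)
  · rintro _ ⟨Ph, hPh, rfl⟩
    exact sum_nonneg fun u _ =>
      mul_nonneg (sum_nonneg fun x _ => mul_nonneg (hPX x).le (hKnn x u)) (hgain _ hPh u)
  · rintro c hc _ ⟨Ph, hPh, rfl⟩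
    exact transfer c (fun Ph' hPh' => hc _ ⟨Ph', hPh', rfl⟩) Ph hPh
end

section
/- Let P_{XY} be a joint pmf on finite alphabets 𝒳×𝒴 with P_X(x)>0 for every x∈𝒳. For the identity gain function g(t)=t, the maximal g-leakage equals the maximal leakage: sup over finite alphabets 𝒰 and channels P_{U|X} of log[ (Σ_{y∈𝒴} P_Y(y)·max_u P_{U|Y}(u|y)) / (max_u P_U(u)) ] = log Σ_{y∈𝒴} max_{x∈𝒳} P_{Y|X}(y|x), where P_{U|Y}(u|y)=Σ_x P_{X|Y}(x|y)P_{U|X}(u|x). -/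
/-!
Writing `P_{U|Y}` through the joint law, the posterior gain is `∑_y max_u ∑_x P(x,y) K(u|x)`.
Since `P(x,y) ≤ (max_x' P_{Y|X}(y|x')) P_X(x)`, each summand is at most
`max_x' P_{Y|X}(y|x') · max_u P_U(u)`, so the ratio is at most `∑_y max_x P_{Y|X}(y|x)`; exchanging
`max_u` and `∑_y` shows it is at least `1`.
Conversely, let `x` pick uniformly one of `⌈n P_X(x)⌉` outputs of its own. Then
`max_u P_U(u) ≤ 1/n`, while the posterior gain is at least `∑_y max_x P(x,y) / (n P_X(x) + 1)`, so
the ratio tends to `∑_y max_x P_{Y|X}(y|x)` as `n → ∞`.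
-/

open Finset

/-- For the identity gain function, the ratio of posterior to prior maximal expected gains:
`(∑_y P_Y(y) max_u P_{U|Y}(u|y)) / (max_u P_U(u))`, where `P_{U|Y}(u|y) = ∑_x P_{X|Y}(x|y) K(u|x)`
and `P_U(u) = ∑_x P_X(x) K(u|x)`. -/
noncomputable def idRatio {X Y U : Type*} [Fintype X] [Fintype Y] [Fintype U] [Nonempty U]
    (P : X → Y → ℝ) (K : X → U → ℝ) : ℝ :=
  (∑ y, (∑ x, P x y) *
      Finset.univ.sup' Finset.univ_nonempty
        (fun u => ∑ x, (P x y / ∑ x', P x' y) * K x u)) /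
    Finset.univ.sup' Finset.univ_nonempty (fun u => ∑ x, (∑ y', P x y') * K x u)

open Filter Topology

section General

variable {ι κ : Type*} [Fintype ι] [Fintype κ] [Nonempty κ]

lemma sum_mul_sum_div_mul_eq (p k : ι → ℝ) (hp : ∀ i, 0 ≤ p i) :
    (∑ i, p i) * ∑ i, (p i / ∑ j, p j) * k i = ∑ i, p i * k i := by
  rcases (Finset.sum_nonneg fun i _ => hp i).eq_or_lt with hzero | hpos
  · have hp0 : ∀ i, p i = 0 := fun i =>
      (Finset.sum_eq_zero_iff_of_nonneg fun i _ => hp i).mp hzero.symm i (mem_univ i)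
    simp [hp0]
  · rw [Finset.mul_sum]
    refine Finset.sum_congr rfl fun i _ => ?_
    field_simp

lemma sup'_sum_le_sum_sup' (f : ι → κ → ℝ) :
    univ.sup' univ_nonempty (fun k => ∑ i, f i k) ≤
      ∑ i, univ.sup' univ_nonempty (f i) :=
  sup'_le _ _ fun k _ => sum_le_sum fun i _ => le_sup' (f i) (mem_univ k)

lemma sum_mul_le_sup'_div_mul [Nonempty ι] (p q k : ι → ℝ) (hq : ∀ i, 0 < q i)
    (hk : ∀ i, 0 ≤ k i) :
    ∑ i, p i * k i ≤ univ.sup' univ_nonempty (fun i => p i / q i) * ∑ i, q i * k i := by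
  rw [Finset.mul_sum]
  refine sum_le_sum fun i _ => ?_
  have hpq : p i ≤ univ.sup' univ_nonempty (fun i => p i / q i) * q i :=
    (div_le_iff₀ (hq i)).mp (le_sup' (fun i => p i / q i) (mem_univ i))
  calc p i * k i ≤ univ.sup' univ_nonempty (fun i => p i / q i) * q i * k i :=
        mul_le_mul_of_nonneg_right hpq (hk i)
    _ = _ := mul_assoc _ _ _

end General

section Channel

variable {X U : Type*} [Fintype X] [Fintype U]

lemma IsChannel.sum_sum_mul {K : X → U → ℝ} (hK : IsChannel K) (w : X → ℝ) :
    ∑ u, ∑ x, w x * K x u = ∑ x, w x := by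
  rw [Finset.sum_comm]
  exact sum_congr rfl fun x _ => by rw [← Finset.mul_sum, (hK x).2, mul_one]

lemma IsChannel.sup'_sum_mul_pos [Nonempty X] [Nonempty U] {K : X → U → ℝ} (hK : IsChannel K)
    (w : X → ℝ) (hw : ∀ x, 0 < w x) :
    0 < univ.sup' univ_nonempty (fun u => ∑ x, w x * K x u) := by
  have hsum : ∑ _u : U, (0 : ℝ) < ∑ u, ∑ x, w x * K x u := by
    rw [hK.sum_sum_mul, sum_const_zero]
    exact sum_pos (fun x _ => hw x) univ_nonempty
  obtain ⟨u, _, hu⟩ := exists_lt_of_sum_lt hsum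
  exact hu.trans_le (le_sup' (fun u => ∑ x, w x * K x u) (mem_univ u))

end Channel

section Leakage

variable {X Y : Type*} [Fintype X] [Fintype Y]

lemma idRatio_eq {U : Type*} [Fintype U] [Nonempty U] (P : X → Y → ℝ)
    (hP : ∀ x y, 0 ≤ P x y) (K : X → U → ℝ) :
    idRatio P K = (∑ y, univ.sup' univ_nonempty (fun u => ∑ x, P x y * K x u)) /
      univ.sup' univ_nonempty (fun u => ∑ x, (∑ y', P x y') * K x u) := by
  unfold idRatio
  congr 1
  refine sum_congr rfl fun y _ => ?_
  rw [mul₀_sup' (sum_nonneg fun x _ => hP x y)]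
  exact sup'_congr _ rfl fun u _ => sum_mul_sum_div_mul_eq (P · y) (K · u) (hP · y)

variable [Nonempty X]

noncomputable def expMaxLeakage (P : X → Y → ℝ) : ℝ :=
  ∑ y, univ.sup' univ_nonempty (fun x => P x y / ∑ y', P x y')

variable {U : Type*} [Fintype U] [Nonempty U] {P : X → Y → ℝ} {K : X → U → ℝ}

lemma one_le_idRatio (hP : ∀ x y, 0 ≤ P x y) (hPX : ∀ x, 0 < ∑ y, P x y)
    (hK : IsChannel K) : 1 ≤ idRatio P K := by
  rw [idRatio_eq P hP, one_le_div (hK.sup'_sum_mul_pos _ hPX)]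
  calc univ.sup' univ_nonempty (fun u => ∑ x, (∑ y', P x y') * K x u)
      = univ.sup' univ_nonempty (fun u => ∑ y, ∑ x, P x y * K x u) := by
        simp only [Finset.sum_mul, Finset.sum_comm (γ := Y)]
    _ ≤ _ := sup'_sum_le_sum_sup' _

lemma idRatio_le_expMaxLeakage (hP : ∀ x y, 0 ≤ P x y) (hPX : ∀ x, 0 < ∑ y, P x y)
    (hK : IsChannel K) : idRatio P K ≤ expMaxLeakage P := by
  rw [idRatio_eq P hP, div_le_iff₀ (hK.sup'_sum_mul_pos _ hPX), expMaxLeakage, Finset.sum_mul]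
  refine sum_le_sum fun y _ => sup'_le _ _ fun u _ => ?_
  obtain ⟨x₀⟩ := ‹Nonempty X›
  refine (sum_mul_le_sup'_div_mul (P · y) _ (K · u) hPX fun x => (hK x).1 u).trans ?_
  exact mul_le_mul_of_nonneg_left (le_sup' (fun u => ∑ x, (∑ y', P x y') * K x u) (mem_univ u))
    (le_sup'_of_le _ (mem_univ x₀) (div_nonneg (hP x₀ y) (hPX x₀).le))

lemma one_le_expMaxLeakage (hPX : ∀ x, 0 < ∑ y, P x y) : 1 ≤ expMaxLeakage P := by
  obtain ⟨x₀⟩ := ‹Nonempty X›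
  calc (1 : ℝ) = ∑ y, P x₀ y / ∑ y', P x₀ y' := by rw [← sum_div, div_self (hPX x₀).ne']
    _ ≤ expMaxLeakage P :=
      sum_le_sum fun y _ => le_sup' (fun x => P x y / ∑ y', P x y') (mem_univ x₀)

lemma tendsto_sum_sup'_div_add_inv (hPX : ∀ x, 0 < ∑ y, P x y) :
    Tendsto (fun n : ℕ => ∑ y, univ.sup' univ_nonempty
      (fun x => P x y / (∑ y', P x y' + (n : ℝ)⁻¹))) atTop (𝓝 (expMaxLeakage P)) := by
  refine tendsto_finsetSum _ fun y _ => Tendsto.finset_sup'_nhds_apply _ fun x _ => ?_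
  have hden := tendsto_const_nhds (x := ∑ y', P x y') |>.add
    (tendsto_inv_atTop_nhds_zero_nat (𝕜 := ℝ))
  rw [add_zero] at hden
  exact tendsto_const_nhds.div hden (hPX x).ne'

end Leakage

section BlockChannel

variable {X : Type*} [Fintype X] [DecidableEq X] (m : X → ℕ)

noncomputable def blockChannel : X → (Σ x, Fin (m x)) → ℝ :=
  fun x u => if u.1 = x then ((m x : ℝ))⁻¹ else 0

lemma isChannel_blockChannel (hm : ∀ x, 0 < m x) : IsChannel (blockChannel m) := by
  intro x
  refine ⟨fun u => ?_, ?_⟩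
  · unfold blockChannel
    split_ifs <;> positivity
  · rw [Fintype.sum_sigma, sum_eq_single x]
    · simp [blockChannel, (hm x).ne']
    · intro x' _ hx'
      simp [blockChannel, hx']
    · simp

lemma sum_mul_blockChannel (f : X → ℝ) (u : Σ x, Fin (m x)) :
    ∑ x, f x * blockChannel m x u = f u.1 / m u.1 := by
  simp [blockChannel, div_eq_mul_inv]

lemma sup'_sum_mul_blockChannel [Nonempty X] [Nonempty (Σ x, Fin (m x))] (hm : ∀ x, 0 < m x)
    (f : X → ℝ) :
    univ.sup' univ_nonempty (fun u => ∑ x, f x * blockChannel m x u) =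
      univ.sup' univ_nonempty (fun x => f x / m x) := by
  simp only [sum_mul_blockChannel]
  exact le_antisymm (sup'_le _ _ fun u _ => le_sup' (fun x => f x / m x) (mem_univ u.1))
    (sup'_le _ _ fun x _ => le_sup' (fun u : Σ x, Fin (m x) => f u.1 / m u.1)
      (mem_univ ⟨x, 0, hm x⟩))

lemma idRatio_blockChannel {Y : Type*} [Fintype Y] [Nonempty X] [Nonempty (Σ x, Fin (m x))]
    (hm : ∀ x, 0 < m x) (P : X → Y → ℝ) (hP : ∀ x y, 0 ≤ P x y) :
    idRatio P (blockChannel m) = (∑ y, univ.sup' univ_nonempty (fun x => P x y / m x)) /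
      univ.sup' univ_nonempty (fun x => (∑ y, P x y) / m x) := by
  simp only [idRatio_eq P hP, sup'_sum_mul_blockChannel m hm]

end BlockChannel

lemma exists_isChannel_sum_sup'_div_add_inv_le_idRatio {X Y : Type} [Fintype X] [Fintype Y]
    [Nonempty X] {P : X → Y → ℝ} (hP : ∀ x y, 0 ≤ P x y)
    (hPX : ∀ x, 0 < ∑ y, P x y) (n : ℕ) (hn : 0 < n) :
    ∃ (U : Type) (_ : Fintype U) (_ : Nonempty U) (K : X → U → ℝ), IsChannel K ∧
      ∑ y, univ.sup' univ_nonempty (fun x => P x y / (∑ y', P x y' + (n : ℝ)⁻¹)) ≤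
        idRatio P K := by
  classical
  set Q : X → ℝ := fun x => ∑ y, P x y
  set m : X → ℕ := fun x => ⌈n * Q x⌉₊
  have hnR : (0 : ℝ) < n := Nat.cast_pos.mpr hn
  have hm : ∀ x, 0 < m x := fun x => Nat.ceil_pos.mpr (mul_pos hnR (hPX x))
  have hmR : ∀ x, (0 : ℝ) < m x := fun x => Nat.cast_pos.mpr (hm x)
  obtain ⟨x₀⟩ := ‹Nonempty X›
  have : Nonempty (Σ x, Fin (m x)) := ⟨⟨x₀, 0, hm x₀⟩⟩
  refine ⟨_, inferInstance, inferInstance, blockChannel m, isChannel_blockChannel m hm, ?_⟩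
  rw [idRatio_blockChannel m hm P hP, le_div_iff₀ ((div_pos (hPX x₀) (hmR x₀)).trans_le
    (le_sup' (fun x => Q x / m x) (mem_univ x₀)))]
  set t := ∑ y, univ.sup' univ_nonempty (fun x => P x y / (Q x + (n : ℝ)⁻¹))
  have ht : 0 ≤ t := sum_nonneg fun y _ => le_sup'_of_le _ (mem_univ x₀)
    (div_nonneg (hP x₀ y) (add_pos (hPX x₀) (inv_pos.mpr hnR)).le)
  have hprior : univ.sup' univ_nonempty (fun x => Q x / m x) ≤ (n : ℝ)⁻¹ :=
    sup'_le _ _ fun x _ => by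
      rw [div_le_iff₀ (hmR x), inv_mul_eq_div, le_div_iff₀' hnR]
      exact Nat.le_ceil _
  have hposterior : t ≤ n * ∑ y, univ.sup' univ_nonempty (fun x => P x y / m x) := by
    simp only [t, Finset.mul_sum, mul₀_sup' hnR.le]
    refine sum_le_sum fun y _ => sup'_mono_fun fun x _ => ?_
    calc P x y / (Q x + (n : ℝ)⁻¹) = n * P x y / (n * Q x + 1) := by field_simp
      _ ≤ n * P x y / m x := div_le_div_of_nonneg_left (mul_nonneg hnR.le (hP x y)) (hmR x)
          (Nat.ceil_lt_add_one (mul_pos hnR (hPX x)).le).le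
      _ = n * (P x y / m x) := mul_div_assoc _ _ _
  calc t * univ.sup' univ_nonempty (fun x => Q x / m x) ≤ t * (n : ℝ)⁻¹ :=
        mul_le_mul_of_nonneg_left hprior ht
    _ ≤ _ := by rwa [← div_eq_mul_inv, div_le_iff₀' hnR]

/-- For the identity gain function `g(t) = t`, the maximal `g`-leakage equals
the maximal leakage `log ∑_y max_x P_{Y|X}(y|x)`. -/
theorem stmt1 {X Y : Type} [Fintype X] [Fintype Y] [Nonempty X]
    (P : X → Y → ℝ) (hP : IsPMF (fun z : X × Y => P z.1 z.2))
    (hPX : ∀ x, 0 < ∑ y, P x y) :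
    IsLUB
      {r : ℝ | ∃ (U : Type) (iU : Fintype U) (nU : Nonempty U) (K : X → U → ℝ),
        @IsChannel X U iU K ∧
        r = Real.log (@idRatio X Y U inferInstance inferInstance iU nU P K)}
      (Real.log (∑ y, Finset.univ.sup' Finset.univ_nonempty
        (fun x => P x y / ∑ y', P x y'))) := by
  have hP0 : ∀ x y, 0 ≤ P x y := fun x y => hP.1 (x, y)
  constructor
  · rintro r ⟨U, iU, nU, K, hK, rfl⟩
    exact Real.log_le_log (one_pos.trans_le (one_le_idRatio hP0 hPX hK))
      (idRatio_le_expMaxLeakage hP0 hPX hK)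
  · intro b hb
    rw [← Real.log_exp b]
    refine Real.log_le_log (one_pos.trans_le (one_le_expMaxLeakage hPX))
      (le_of_tendsto (tendsto_sum_sup'_div_add_inv hPX) ?_)
    filter_upwards [eventually_gt_atTop 0] with n hn
    obtain ⟨U, iU, nU, K, hK, hle⟩ :=
      exists_isChannel_sum_sup'_div_add_inv_le_idRatio hP0 hPX n hn
    refine hle.trans ((Real.log_le_iff_le_exp ?_).mp (hb ⟨U, iU, nU, K, hK, rfl⟩))
    exact one_pos.trans_le (one_le_idRatio hP0 hPX hK)
end

section
/- Let P and Q be pmfs on a finite alphabet 𝒳 with Q(x)>0 for all x. Let g:[0,1]→[0,∞) satisfy: g(0)=0, g is continuous at 0, and 0 < sup_{p∈[0,1]} g(p) < ∞. Then sup over finite alphabets 𝒰 and channels P_{U|X} from 𝒳 to 𝒰 of log[ G_g(P_U) / G_g(Q_U) ] = D_∞(P‖Q), where P_U(u)=Σ_x P(x)P_{U|X}(u|x) and Q_U(u)=Σ_x Q(x)P_{U|X}(u|x). -/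
/-!
Upper bound: `P ≤ exp (D_∞(P‖Q)) • Q` pointwise, so `P_U ≤ exp (D_∞(P‖Q)) • Q_U` for every
channel, and `G_g` is monotone and positively homogeneous in its argument because `g ≥ 0`.

Lower bound: let `x₀` attain `D_∞(P‖Q)` and send `x₀` to a dedicated symbol while spreading every
other input uniformly over `n + 1` further symbols. Guessing on the dedicated symbol alone gives
`G_g(P_U) ≥ P(x₀) · sup g`. Any guess puts mass `≥ δ` on at most `1/δ` of the spread symbols and
`g` is small on `[0, δ)` by continuity at `0`, so `G_g(Q_U) ≤ Q(x₀) · sup g + o(1)` as `n → ∞`.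
-/

open Finset

/-- The pmf induced on `U` by a pmf `P` on `X` and a channel `K`. -/
noncomputable def push {X U : Type*} [Fintype X] (P : X → ℝ) (K : X → U → ℝ) : U → ℝ :=
  fun u => ∑ x, P x * K x u

/-- The maximal expected gain `G_g(R) = sup_{P̂} ∑_u R(u) g(P̂(u))`. -/
noncomputable def maxGain {U : Type*} [Fintype U] (g : ℝ → ℝ) (R : U → ℝ) : ℝ :=
  sSup {v : ℝ | ∃ Ph : U → ℝ, IsPMF Ph ∧ v = ∑ u, R u * g (Ph u)}

/-- The Rényi divergence of order `∞`: `max_{x : P(x) > 0} log (P(x)/Q(x))`. -/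
noncomputable def Dinf {X : Type*} [Fintype X] (P Q : X → ℝ) : ℝ :=
  sSup {v : ℝ | ∃ x, 0 < P x ∧ v = Real.log (P x / Q x)}

namespace IsPMF

variable {U : Type*} [Fintype U] {p : U → ℝ}

lemma le_one (hp : IsPMF p) (u : U) : p u ≤ 1 :=
  hp.2 ▸ single_le_sum (fun i _ => hp.1 i) (mem_univ u)

lemma mem_Icc_s3 (hp : IsPMF p) (u : U) : p u ∈ Set.Icc (0 : ℝ) 1 :=
  ⟨hp.1 u, hp.le_one u⟩

lemma nonempty (hp : IsPMF p) : Nonempty U := by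
  by_contra h
  rw [not_nonempty_iff] at h
  simpa using hp.2

end IsPMF

lemma isPMF_ite_eq {U : Type*} [Fintype U] [DecidableEq U] (u₀ : U) :
    IsPMF fun u => if u = u₀ then (1 : ℝ) else 0 :=
  ⟨fun u => by dsimp only; split_ifs <;> norm_num, by simp⟩

lemma isPMF_ite_eq_ite_eq {U : Type*} [Fintype U] [DecidableEq U] {u₀ u₁ : U} (h : u₀ ≠ u₁)
    {t : ℝ} (ht : t ∈ Set.Icc (0 : ℝ) 1) :
    IsPMF fun u => if u = u₀ then t else if u = u₁ then 1 - t else 0 := by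
  refine ⟨fun u => by dsimp only; split_ifs <;> linarith [ht.1, ht.2], ?_⟩
  rw [Fintype.sum_eq_add u₀ u₁ h (fun u hu => by simp [hu.1, hu.2])]
  simp [h.symm]

lemma push_isPMF {X U : Type*} [Fintype X] [Fintype U] {P : X → ℝ} {K : X → U → ℝ}
    (hP : IsPMF P) (hK : IsChannel K) : IsPMF (push P K) := by
  refine ⟨fun u => sum_nonneg fun x _ => mul_nonneg (hP.1 x) ((hK x).1 u), ?_⟩
  simp only [push]
  rw [sum_comm]
  simp [← mul_sum, (hK _).2, hP.2]

lemma push_le_mul_push {X U : Type*} [Fintype X] {P Q : X → ℝ} {K : X → U → ℝ} {a : ℝ}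
    (hPQ : ∀ x, P x ≤ a * Q x) (hK : ∀ x u, 0 ≤ K x u) (u : U) :
    push P K u ≤ a * push Q K u := by
  simp only [push, mul_sum, ← mul_assoc]
  exact sum_le_sum fun x _ => mul_le_mul_of_nonneg_right (hPQ x) (hK x u)

section maxGain

variable {U : Type*} [Fintype U] {g : ℝ → ℝ} {M : ℝ} {R : U → ℝ}

lemma sum_le_maxGain (hgM : ∀ t ∈ Set.Icc (0 : ℝ) 1, g t ≤ M) (hR : IsPMF R)
    {Ph : U → ℝ} (hPh : IsPMF Ph) : ∑ u, R u * g (Ph u) ≤ maxGain g R := by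
  refine le_csSup ⟨M, ?_⟩ ⟨Ph, hPh, rfl⟩
  rintro v ⟨Ph', hPh', rfl⟩
  calc ∑ u, R u * g (Ph' u) ≤ ∑ u, R u * M :=
        sum_le_sum fun u _ => mul_le_mul_of_nonneg_left (hgM _ (hPh'.mem_Icc_s3 u)) (hR.1 u)
    _ = M := by rw [← sum_mul, hR.2, one_mul]

lemma maxGain_le [Nonempty U] {a : ℝ} (h : ∀ Ph : U → ℝ, IsPMF Ph → ∑ u, R u * g (Ph u) ≤ a) :
    maxGain g R ≤ a := by
  classical
  refine csSup_le ⟨_, _, isPMF_ite_eq (Classical.arbitrary U), rfl⟩ ?_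
  rintro v ⟨Ph, hPh, rfl⟩
  exact h Ph hPh

lemma maxGain_nonneg (hgnn : ∀ t ∈ Set.Icc (0 : ℝ) 1, 0 ≤ g t)
    (hgM : ∀ t ∈ Set.Icc (0 : ℝ) 1, g t ≤ M) (hR : IsPMF R) : 0 ≤ maxGain g R := by
  classical
  have := hR.nonempty
  have hPh := isPMF_ite_eq (Classical.arbitrary U)
  exact (sum_nonneg fun u _ => mul_nonneg (hR.1 u) (hgnn _ (hPh.mem_Icc_s3 u))).trans
    (sum_le_maxGain hgM hR hPh)

lemma maxGain_le_mul_maxGain (hgnn : ∀ t ∈ Set.Icc (0 : ℝ) 1, 0 ≤ g t)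
    (hgM : ∀ t ∈ Set.Icc (0 : ℝ) 1, g t ≤ M) {S : U → ℝ} (hS : IsPMF S) {a : ℝ} (ha : 0 ≤ a)
    (hRS : ∀ u, R u ≤ a * S u) : maxGain g R ≤ a * maxGain g S := by
  have := hS.nonempty
  refine maxGain_le fun Ph hPh => ?_
  calc ∑ u, R u * g (Ph u) ≤ ∑ u, a * (S u * g (Ph u)) := sum_le_sum fun u _ => by
        rw [← mul_assoc]; exact mul_le_mul_of_nonneg_right (hRS u) (hgnn _ (hPh.mem_Icc_s3 u))
    _ = a * ∑ u, S u * g (Ph u) := by rw [mul_sum]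
    _ ≤ a * maxGain g S := mul_le_mul_of_nonneg_left (sum_le_maxGain hgM hS hPh) ha

lemma mul_le_maxGain_of_ne [DecidableEq U] (hgnn : ∀ t ∈ Set.Icc (0 : ℝ) 1, 0 ≤ g t)
    (hgM : ∀ t ∈ Set.Icc (0 : ℝ) 1, g t ≤ M) (hR : IsPMF R) {u₀ u₁ : U} (h : u₀ ≠ u₁)
    {t : ℝ} (ht : t ∈ Set.Icc (0 : ℝ) 1) : R u₀ * g t ≤ maxGain g R := by
  have hPh := isPMF_ite_eq_ite_eq h ht
  refine le_trans ?_ (sum_le_maxGain hgM hR hPh)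
  rw [← add_sum_erase _ _ (mem_univ u₀), if_pos rfl]
  exact le_add_of_nonneg_right
    (sum_nonneg fun u _ => mul_nonneg (hR.1 u) (hgnn _ (hPh.mem_Icc_s3 u)))

lemma mul_sSup_le_maxGain_of_ne [DecidableEq U] (hgnn : ∀ t ∈ Set.Icc (0 : ℝ) 1, 0 ≤ g t)
    (hgb : BddAbove (g '' Set.Icc (0 : ℝ) 1)) (hR : IsPMF R) {u₀ u₁ : U} (h : u₀ ≠ u₁)
    (hR₀ : 0 < R u₀) : R u₀ * sSup (g '' Set.Icc (0 : ℝ) 1) ≤ maxGain g R := by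
  rw [← le_div_iff₀' hR₀]
  refine csSup_le ⟨g 0, 0, ⟨le_rfl, zero_le_one⟩, rfl⟩ ?_
  rintro _ ⟨t, ht, rfl⟩
  rw [le_div_iff₀' hR₀]
  exact mul_le_maxGain_of_ne hgnn (fun s hs => le_csSup hgb ⟨s, hs, rfl⟩) hR h ht

end maxGain

section Dinf

variable {X : Type*} [Fintype X] {P Q : X → ℝ}

lemma finite_Dinf_set (P Q : X → ℝ) :
    {v : ℝ | ∃ x, 0 < P x ∧ v = Real.log (P x / Q x)}.Finite :=
  (Set.finite_range fun x => Real.log (P x / Q x)).subset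
    (by rintro v ⟨x, _, rfl⟩; exact ⟨x, rfl⟩)

lemma log_div_le_Dinf {x : X} (hx : 0 < P x) : Real.log (P x / Q x) ≤ Dinf P Q :=
  le_csSup (finite_Dinf_set P Q).bddAbove ⟨x, hx, rfl⟩

lemma exists_Dinf_eq (hP : IsPMF P) : ∃ x, 0 < P x ∧ Dinf P Q = Real.log (P x / Q x) := by
  obtain ⟨x, hx⟩ : ∃ x, 0 < P x := by
    by_contra! h
    simpa [fun x => le_antisymm (h x) (hP.1 x)] using hP.2
  obtain ⟨y, hy, hD⟩ := Set.Nonempty.csSup_mem (by exact ⟨_, x, hx, rfl⟩) (finite_Dinf_set P Q)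
  exact ⟨y, hy, hD⟩

lemma le_exp_Dinf_mul (hP : IsPMF P) (hQpos : ∀ x, 0 < Q x) (x : X) :
    P x ≤ Real.exp (Dinf P Q) * Q x := by
  rcases (hP.1 x).eq_or_lt with hx | hx
  · rw [← hx]; exact mul_nonneg (Real.exp_nonneg _) (hQpos x).le
  · rw [← div_le_iff₀ (hQpos x), ← Real.log_le_iff_le_exp (div_pos hx (hQpos x))]
    exact log_div_le_Dinf hx

lemma Dinf_nonneg (hP : IsPMF P) (hQ : IsPMF Q) (hQpos : ∀ x, 0 < Q x) : 0 ≤ Dinf P Q := by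
  rw [← Real.one_le_exp_iff]
  calc 1 = ∑ x, P x := hP.2.symm
    _ ≤ ∑ x, Real.exp (Dinf P Q) * Q x := sum_le_sum fun x _ => le_exp_Dinf_mul hP hQpos x
    _ = Real.exp (Dinf P Q) := by rw [← mul_sum, hQ.2, mul_one]

end Dinf

lemma log_maxGain_div_le_Dinf {X U : Type*} [Fintype X] [Fintype U] {P Q : X → ℝ}
    (hP : IsPMF P) (hQ : IsPMF Q) (hQpos : ∀ x, 0 < Q x) {g : ℝ → ℝ}
    (hgnn : ∀ t ∈ Set.Icc (0 : ℝ) 1, 0 ≤ g t) (hgb : BddAbove (g '' Set.Icc (0 : ℝ) 1))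
    {K : X → U → ℝ} (hK : IsChannel K) :
    Real.log (maxGain g (push P K) / maxGain g (push Q K)) ≤ Dinf P Q := by
  obtain ⟨M, hM⟩ := hgb
  have hgM : ∀ t ∈ Set.Icc (0 : ℝ) 1, g t ≤ M := fun t ht => hM ⟨t, ht, rfl⟩
  have hAB : maxGain g (push P K) ≤ Real.exp (Dinf P Q) * maxGain g (push Q K) :=
    maxGain_le_mul_maxGain hgnn hgM (push_isPMF hQ hK) (Real.exp_nonneg _)
      (push_le_mul_push (le_exp_Dinf_mul hP hQpos) fun x u => (hK x).1 u)
  rcases (maxGain_nonneg hgnn hgM (push_isPMF hP hK)).eq_or_lt with hA | hA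
  · rw [← hA, zero_div, Real.log_zero]
    exact Dinf_nonneg hP hQ hQpos
  · have hB : 0 < maxGain g (push Q K) :=
      pos_of_mul_pos_right (hA.trans_le hAB) (Real.exp_nonneg _)
    rw [Real.log_le_iff_le_exp (div_pos hA hB), div_le_iff₀ hB]
    exact hAB

lemma sum_le_div_add_card_mul {ι : Type*} [Fintype ι] {g : ℝ → ℝ} {M c δ : ℝ}
    (hgM : ∀ t ∈ Set.Icc (0 : ℝ) 1, g t ≤ M) (hM : 0 ≤ M)
    (hsmall : ∀ t ∈ Set.Icc (0 : ℝ) 1, t < δ → g t ≤ c) (hc : 0 ≤ c) (hδ : 0 < δ)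
    {p : ι → ℝ} (hp : ∀ i, p i ∈ Set.Icc (0 : ℝ) 1) (hsum : ∑ i, p i ≤ 1) :
    ∑ i, g (p i) ≤ M / δ + Fintype.card ι * c := by
  classical
  set T := univ.filter fun i => δ ≤ p i
  have hT : (#T : ℝ) * δ ≤ 1 :=
    calc (#T : ℝ) * δ = ∑ _i ∈ T, δ := by rw [sum_const, nsmul_eq_mul]
      _ ≤ ∑ i ∈ T, p i := sum_le_sum fun i hi => (mem_filter.mp hi).2
      _ ≤ ∑ i, p i := sum_le_sum_of_subset_of_nonneg (filter_subset _ _) fun i _ _ => (hp i).1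
      _ ≤ 1 := hsum
  have hlarge : ∑ i ∈ T, g (p i) ≤ M / δ :=
    calc ∑ i ∈ T, g (p i) ≤ ∑ _i ∈ T, M := sum_le_sum fun i _ => hgM _ (hp i)
      _ = (#T : ℝ) * δ * M / δ := by rw [sum_const, nsmul_eq_mul]; field_simp
      _ ≤ 1 * M / δ := by gcongr
      _ = M / δ := by rw [one_mul]
  have hrest : ∑ i ∈ univ.filter (fun i => ¬ δ ≤ p i), g (p i) ≤ Fintype.card ι * c :=
    calc ∑ i ∈ univ.filter (fun i => ¬ δ ≤ p i), g (p i)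
        ≤ ∑ i ∈ univ.filter (fun i => ¬ δ ≤ p i), c :=
          sum_le_sum fun i hi => hsmall _ (hp i) (not_le.mp (mem_filter.mp hi).2)
      _ = #(univ.filter fun i => ¬ δ ≤ p i) * c := by rw [sum_const, nsmul_eq_mul]
      _ ≤ Fintype.card ι * c := by
          gcongr
          exact card_filter_le _ _
  rw [← sum_filter_add_sum_filter_not univ fun i => δ ≤ p i]
  exact add_le_add hlarge hrest

section isolate

variable {X : Type*} [DecidableEq X]

noncomputable def isolate (x₀ : X) (n : ℕ) : X → Option (Fin (n + 1)) → ℝ :=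
  fun x u => if x = x₀ then (if u = none then 1 else 0) else (if u = none then 0 else 1 / (n + 1))

lemma isolate_isChannel (x₀ : X) (n : ℕ) : IsChannel (isolate x₀ n) := by
  intro x
  refine ⟨fun u => by unfold isolate; split_ifs <;> positivity, ?_⟩
  by_cases hx : x = x₀ <;> simp [isolate, hx, Fintype.sum_option]
  field_simp

lemma push_isolate_none [Fintype X] (R : X → ℝ) (x₀ : X) (n : ℕ) : push R (isolate x₀ n) none = R x₀ := by
  simp [push, isolate]

lemma push_isolate_some [Fintype X] {R : X → ℝ} (hR : ∑ x, R x = 1) (x₀ : X) (n : ℕ) (i : Fin (n + 1)) :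
    push R (isolate x₀ n) (some i) = (1 - R x₀) / (n + 1) := by
  have h : ∀ x, R x * isolate x₀ n x (some i) = (R x - if x = x₀ then R x else 0) / (n + 1) := by
    intro x
    by_cases hx : x = x₀ <;> simp [isolate, hx, div_eq_mul_inv]
  simp only [push, h, ← sum_div, sum_sub_distrib, sum_ite_eq', mem_univ, if_true, hR]

variable [Fintype X] {R : X → ℝ} {g : ℝ → ℝ}

lemma mul_sSup_le_maxGain_push_isolate (hgnn : ∀ t ∈ Set.Icc (0 : ℝ) 1, 0 ≤ g t)
    (hgb : BddAbove (g '' Set.Icc (0 : ℝ) 1)) (hR : IsPMF R) {x₀ : X} (hR₀ : 0 < R x₀) (n : ℕ) :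
    R x₀ * sSup (g '' Set.Icc (0 : ℝ) 1) ≤ maxGain g (push R (isolate x₀ n)) := by
  have h := mul_sSup_le_maxGain_of_ne hgnn hgb (push_isPMF hR (isolate_isChannel x₀ n))
    (Option.some_ne_none 0).symm (by rwa [push_isolate_none])
  rwa [push_isolate_none] at h

lemma maxGain_push_isolate_le (hgnn : ∀ t ∈ Set.Icc (0 : ℝ) 1, 0 ≤ g t) {M c δ : ℝ}
    (hgM : ∀ t ∈ Set.Icc (0 : ℝ) 1, g t ≤ M) (hM : 0 ≤ M)
    (hsmall : ∀ t ∈ Set.Icc (0 : ℝ) 1, t < δ → g t ≤ c) (hc : 0 ≤ c) (hδ : 0 < δ)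
    (hR : IsPMF R) (x₀ : X) (n : ℕ) :
    maxGain g (push R (isolate x₀ n)) ≤ R x₀ * M + (M / ((n + 1) * δ) + c) := by
  refine maxGain_le fun Ph hPh => ?_
  have hsum : ∑ i, Ph (some i) ≤ 1 := by
    have h := hPh.2
    rw [Fintype.sum_option] at h
    linarith [hPh.1 none]
  have hspread := sum_le_div_add_card_mul hgM hM hsmall hc hδ (fun i => hPh.mem_Icc_s3 _) hsum
  rw [Fintype.card_fin] at hspread
  rw [Fintype.sum_option, push_isolate_none]
  gcongr
  · exact hR.1 x₀
  · exact hgM _ (hPh.mem_Icc_s3 none)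
  · simp only [push_isolate_some hR.2]
    calc ∑ i, (1 - R x₀) / (n + 1) * g (Ph (some i))
        ≤ ∑ i, 1 / (n + 1) * g (Ph (some i)) := by
          gcongr with i
          · exact hgnn _ (hPh.mem_Icc_s3 _)
          · linarith [hR.1 x₀]
      _ = 1 / (n + 1) * ∑ i, g (Ph (some i)) := by rw [mul_sum]
      _ ≤ 1 / (n + 1) * (M / δ + (n + 1 : ℕ) * c) := by gcongr
      _ = M / ((n + 1) * δ) + c := by field_simp; push_cast; ring

lemma exists_maxGain_push_isolate_lt (hgnn : ∀ t ∈ Set.Icc (0 : ℝ) 1, 0 ≤ g t) (hg0 : g 0 = 0)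
    (hgc : ContinuousWithinAt g (Set.Icc (0 : ℝ) 1) 0) (hgb : BddAbove (g '' Set.Icc (0 : ℝ) 1))
    (hR : IsPMF R) (x₀ : X) {η : ℝ} (hη : 0 < η) :
    ∃ n : ℕ, maxGain g (push R (isolate x₀ n)) < R x₀ * sSup (g '' Set.Icc (0 : ℝ) 1) + η := by
  set M := sSup (g '' Set.Icc (0 : ℝ) 1)
  have hgM : ∀ t ∈ Set.Icc (0 : ℝ) 1, g t ≤ M := fun t ht => le_csSup hgb ⟨t, ht, rfl⟩
  have h0 : (0 : ℝ) ∈ Set.Icc (0 : ℝ) 1 := ⟨le_rfl, zero_le_one⟩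
  have hM : 0 ≤ M := (hgnn 0 h0).trans (hgM 0 h0)
  obtain ⟨δ, hδ, hδg⟩ := Metric.continuousWithinAt_iff.mp hgc (η / 2) (half_pos hη)
  have hsmall : ∀ t ∈ Set.Icc (0 : ℝ) 1, t < δ → g t ≤ η / 2 := fun t ht htδ => by
    have h := hδg ht (by rwa [Real.dist_0_eq_abs, abs_of_nonneg ht.1])
    rw [hg0, Real.dist_0_eq_abs] at h
    exact (le_abs_self _).trans h.le
  obtain ⟨n, hn⟩ := exists_nat_gt (M / (δ * (η / 2)))
  refine ⟨n, (maxGain_push_isolate_le hgnn hgM hM hsmall (half_pos hη).le hδ hR x₀ n).trans_lt ?_⟩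
  have hsplit : M / ((n + 1) * δ) < η / 2 := by
    rw [div_lt_iff₀ (by positivity)]
    rw [div_lt_iff₀ (by positivity)] at hn
    nlinarith
  linarith

end isolate

lemma exists_lt_log_maxGain_push_isolate_div {X : Type*} [Fintype X] [DecidableEq X]
    {P Q : X → ℝ} (hP : IsPMF P) (hQ : IsPMF Q) {g : ℝ → ℝ}
    (hgnn : ∀ t ∈ Set.Icc (0 : ℝ) 1, 0 ≤ g t) (hg0 : g 0 = 0)
    (hgc : ContinuousWithinAt g (Set.Icc (0 : ℝ) 1) 0) (hgb : BddAbove (g '' Set.Icc (0 : ℝ) 1))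
    (hgpos : 0 < sSup (g '' Set.Icc (0 : ℝ) 1)) {x₀ : X} (hP₀ : 0 < P x₀) (hQ₀ : 0 < Q x₀)
    {c : ℝ} (hc : c < Real.log (P x₀ / Q x₀)) :
    ∃ n : ℕ, c < Real.log (maxGain g (push P (isolate x₀ n)) / maxGain g (push Q (isolate x₀ n))) := by
  set M := sSup (g '' Set.Icc (0 : ℝ) 1)
  have hcP : Real.exp c * Q x₀ < P x₀ := by
    rwa [Real.lt_log_iff_exp_lt (div_pos hP₀ hQ₀), lt_div_iff₀ hQ₀] at hc
  have hη : 0 < (P x₀ - Real.exp c * Q x₀) * M / Real.exp c := by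
    have := sub_pos.mpr hcP
    positivity
  obtain ⟨n, hB⟩ := exists_maxGain_push_isolate_lt hgnn hg0 hgc hgb hQ x₀ hη
  have hA := mul_sSup_le_maxGain_push_isolate hgnn hgb hP hP₀ n
  have hB₀ := (mul_pos hQ₀ hgpos).trans_le (mul_sSup_le_maxGain_push_isolate hgnn hgb hQ hQ₀ n)
  have hA₀ := (mul_pos hP₀ hgpos).trans_le hA
  refine ⟨n, ?_⟩
  rw [Real.lt_log_iff_exp_lt (div_pos hA₀ hB₀), lt_div_iff₀ hB₀]
  calc Real.exp c * maxGain g (push Q (isolate x₀ n))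
      < Real.exp c * (Q x₀ * M + (P x₀ - Real.exp c * Q x₀) * M / Real.exp c) := by gcongr
    _ = P x₀ * M := by field_simp; ring
    _ ≤ maxGain g (push P (isolate x₀ n)) := hA

/-- Variational characterization of `D_∞`: for any gain function `g` with
`g(0) = 0`, `g` continuous at `0`, and `0 < sup_{p ∈ [0,1]} g(p) < ∞`,
`sup_{U, P_{U|X}} log (G_g(P_U) / G_g(Q_U)) = D_∞(P‖Q)`. -/
theorem stmt3 {X : Type} [Fintype X]
    (P Q : X → ℝ) (hP : IsPMF P) (hQ : IsPMF Q) (hQpos : ∀ x, 0 < Q x)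
    (g : ℝ → ℝ)
    (hgnn : ∀ t ∈ Set.Icc (0:ℝ) 1, 0 ≤ g t)
    (hg0 : g 0 = 0)
    (hgc : ContinuousWithinAt g (Set.Icc (0:ℝ) 1) 0)
    (hgb : BddAbove (g '' Set.Icc (0:ℝ) 1))
    (hgpos : 0 < sSup (g '' Set.Icc (0:ℝ) 1)) :
    IsLUB
      {r : ℝ | ∃ (U : Type) (iU : Fintype U) (K : X → U → ℝ),
        @IsChannel X U iU K ∧
        r = Real.log (@maxGain U iU g (push P K) / @maxGain U iU g (push Q K))}
      (Dinf P Q) := by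
  classical
  refine ⟨?_, fun b hb => le_of_forall_lt fun c hc => ?_⟩
  · rintro r ⟨U, iU, K, hK, rfl⟩
    exact log_maxGain_div_le_Dinf hP hQ hQpos hgnn hgb hK
  · obtain ⟨x₀, hP₀, hD⟩ := exists_Dinf_eq (Q := Q) hP
    obtain ⟨n, hn⟩ := exists_lt_log_maxGain_push_isolate_div hP hQ hgnn hg0 hgc hgb hgpos hP₀
      (hQpos x₀) (hD ▸ hc)
    exact hn.trans_le (hb ⟨_, inferInstance, _, isolate_isChannel x₀ n, rfl⟩)
end

section
/- Let P and Q be pmfs on a finite alphabet 𝒳 with Q(x)>0 for all x, and let α∈(1,∞). Then sup over finite alphabets 𝒰 and channels P_{U|X} from 𝒳 to 𝒰 of log[ (Σ_u P_U(u)^α)^{1/α} / (Σ_u Q_U(u)^α)^{1/α} ] = D_∞(P‖Q), where P_U(u)=Σ_x P(x)P_{U|X}(u|x) and Q_U(u)=Σ_x Q(x)P_{U|X}(u|x). -/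
open Finset

/-- The `α`-norm-type quantity `(∑_u R(u)^α)^{1/α}`. -/
noncomputable def alphaNorm {U : Type*} [Fintype U] (α : ℝ) (R : U → ℝ) : ℝ :=
  (∑ u, R u ^ α) ^ (1 / α)

/-!
Let `c = max_x P(x)/Q(x)`, attained at `x₀`. Since `P ≤ c Q` pointwise, also `P_U ≤ c Q_U`
pointwise for every channel, so the `α`-norm ratio is at most `c`, and `log c = D_∞(P‖Q)`.
Conversely, send `x₀` to a symbol of its own and spread every other letter uniformly over `n`
further symbols. The `α`-th powers of that spread-out mass add up to `O(n^{1-α})`, which vanishes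
because `α > 1`, so the `α`-norms of `P_U` and `Q_U` tend to `P(x₀)` and `Q(x₀)`.
-/

open Filter Topology

section AlphaNorm

variable {U : Type*} [Fintype U] {α : ℝ}

lemma alphaNorm_pos {R : U → ℝ} (hR : IsPMF R) : 0 < alphaNorm α R := by
  obtain ⟨u, -, hu⟩ : ∃ u ∈ univ, (0 : ℝ) < R u :=
    exists_lt_of_sum_lt (by simp [hR.2])
  refine Real.rpow_pos_of_pos (sum_pos' (fun v _ => Real.rpow_nonneg (hR.1 v) α) ?_) _
  exact ⟨u, mem_univ u, Real.rpow_pos_of_pos hu α⟩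

lemma alphaNorm_mono {R S : U → ℝ} (hR : ∀ u, 0 ≤ R u) (hRS : ∀ u, R u ≤ S u) (hα : 0 < α) :
    alphaNorm α R ≤ alphaNorm α S := by
  have hpow : ∀ u, R u ^ α ≤ S u ^ α := fun u => Real.rpow_le_rpow (hR u) (hRS u) hα.le
  exact Real.rpow_le_rpow (sum_nonneg fun u _ => Real.rpow_nonneg (hR u) α)
    (sum_le_sum fun u _ => hpow u) (by positivity)

lemma alphaNorm_const_mul {c : ℝ} (hc : 0 ≤ c) {R : U → ℝ} (hR : ∀ u, 0 ≤ R u) (hα : α ≠ 0) :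
    alphaNorm α (fun u => c * R u) = c * alphaNorm α R := by
  simp only [alphaNorm, Real.mul_rpow hc (hR _), ← mul_sum]
  rw [Real.mul_rpow (Real.rpow_nonneg hc α) (sum_nonneg fun u _ => Real.rpow_nonneg (hR u) α),
    one_div, Real.rpow_rpow_inv hc hα]

end AlphaNorm

section Push

variable {X U : Type*} [Fintype X]

lemma IsPMF.push [Fintype U] {P : X → ℝ} {K : X → U → ℝ} (hP : IsPMF P) (hK : IsChannel K) :
    IsPMF (push P K) := by
  refine ⟨fun u => sum_nonneg fun x _ => mul_nonneg (hP.1 x) ((hK x).1 u), ?_⟩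
  simp only [_root_.push]
  rw [sum_comm]
  simp only [← mul_sum, (hK _).2, mul_one, hP.2]

lemma push_le_const_mul_push {P Q : X → ℝ} {K : X → U → ℝ} {c : ℝ} (hPQ : ∀ x, P x ≤ c * Q x)
    (hK : ∀ x u, 0 ≤ K x u) (u : U) : push P K u ≤ c * push Q K u := by
  simp only [push, mul_sum, ← mul_assoc]
  exact sum_le_sum fun x _ => mul_le_mul_of_nonneg_right (hPQ x) (hK x u)

lemma alphaNorm_push_div_le [Fintype U] {P Q : X → ℝ} {K : X → U → ℝ} {c : ℝ} (hQ : IsPMF Q)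
    (hK : IsChannel K) (hc : 0 ≤ c) (hPQ : ∀ x, P x ≤ c * Q x) (hP : ∀ x, 0 ≤ P x)
    {α : ℝ} (hα : 0 < α) :
    alphaNorm α (push P K) / alphaNorm α (push Q K) ≤ c := by
  have hQK := hQ.push hK
  rw [div_le_iff₀ (alphaNorm_pos hQK), ← alphaNorm_const_mul hc hQK.1 hα.ne']
  exact alphaNorm_mono (fun u => sum_nonneg fun x _ => mul_nonneg (hP x) ((hK x).1 u))
    (push_le_const_mul_push hPQ fun x => (hK x).1) hα

end Push

section SplitChannel

variable {X : Type*} [DecidableEq X]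

noncomputable def splitChannel (x₀ : X) (n : ℕ) (x : X) : Option (Fin n) → ℝ
  | none => if x = x₀ then 1 else 0
  | some _ => if x = x₀ then 0 else (n : ℝ)⁻¹

lemma isChannel_splitChannel (x₀ : X) {n : ℕ} (hn : n ≠ 0) : IsChannel (splitChannel x₀ n) := by
  intro x
  refine ⟨fun u => by cases u <;> simp only [splitChannel] <;> split_ifs <;> positivity, ?_⟩
  rw [Fintype.sum_option]
  by_cases hx : x = x₀ <;> simp [splitChannel, hx, hn]

lemma push_splitChannel_none [Fintype X] (x₀ : X) (n : ℕ) (R : X → ℝ) :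
    push R (splitChannel x₀ n) none = R x₀ := by
  simp [push, splitChannel]

lemma push_splitChannel_some [Fintype X] (x₀ : X) (n : ℕ) (R : X → ℝ) (i : Fin n) :
    push R (splitChannel x₀ n) (some i) = (∑ x ∈ univ.erase x₀, R x) / n := by
  simp only [push, splitChannel, mul_ite, mul_zero]
  rw [← add_sum_erase _ _ (mem_univ x₀), if_pos rfl, zero_add, sum_div]
  exact sum_congr rfl fun x hx => by rw [if_neg (ne_of_mem_erase hx), div_eq_mul_inv]

lemma alphaNorm_push_splitChannel [Fintype X] (x₀ : X) {n : ℕ} (hn : n ≠ 0) {R : X → ℝ}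
    (hR : ∀ x, 0 ≤ R x) (α : ℝ) :
    alphaNorm α (push R (splitChannel x₀ n))
      = (R x₀ ^ α + (∑ x ∈ univ.erase x₀, R x) ^ α * (n : ℝ) ^ (1 - α)) ^ (1 / α) := by
  have hn' : (0 : ℝ) < n := by positivity
  have hS : 0 ≤ ∑ x ∈ univ.erase x₀, R x := sum_nonneg fun x _ => hR x
  rw [alphaNorm, Fintype.sum_option, push_splitChannel_none]
  simp only [push_splitChannel_some, sum_const, card_univ, Fintype.card_fin, nsmul_eq_mul,
    Real.div_rpow hS hn'.le, Real.rpow_sub hn', Real.rpow_one, mul_div_left_comm]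

lemma tendsto_alphaNorm_push_splitChannel [Fintype X] (x₀ : X) {R : X → ℝ}
    (hR : ∀ x, 0 ≤ R x) {α : ℝ} (hα : 1 < α) :
    Tendsto (fun n : ℕ => alphaNorm α (push R (splitChannel x₀ n))) atTop (𝓝 (R x₀)) := by
  have hpow : Tendsto (fun n : ℕ => (n : ℝ) ^ (1 - α)) atTop (𝓝 0) := by
    have h := (tendsto_rpow_neg_atTop (by linarith : 0 < α - 1)).comp tendsto_natCast_atTop_atTop
    simpa only [neg_sub, Function.comp_def] using h
  have hlim := (tendsto_const_nhds (x := R x₀ ^ α)).add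
    (hpow.const_mul ((∑ x ∈ univ.erase x₀, R x) ^ α)) |>.rpow_const (p := 1 / α)
    (Or.inr (by positivity))
  rw [mul_zero, add_zero, one_div, Real.rpow_rpow_inv (hR x₀) (by positivity), ← one_div] at hlim
  refine hlim.congr' ?_
  filter_upwards [eventually_ne_atTop 0] with n hn
  rw [alphaNorm_push_splitChannel x₀ hn hR]

end SplitChannel

section Dinf

variable {X : Type*} [Fintype X]

lemma exists_max_div_of_isPMF {P Q : X → ℝ} (hP : IsPMF P) (hQ : IsPMF Q)
    (hQpos : ∀ x, 0 < Q x) :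
    ∃ x₀, Q x₀ ≤ P x₀ ∧ ∀ x, P x / Q x ≤ P x₀ / Q x₀ := by
  have : Nonempty X := by
    by_contra h
    have := hP.2
    simp [not_nonempty_iff.1 h] at this
  obtain ⟨x₁, -, hx₁⟩ := exists_le_of_sum_le univ_nonempty (hQ.2.trans hP.2.symm).le
  obtain ⟨x₀, hx₀⟩ := Finite.exists_max fun x => P x / Q x
  refine ⟨x₀, ?_, hx₀⟩
  rw [← one_le_div (hQpos x₀)]
  exact ((one_le_div (hQpos x₁)).2 hx₁).trans (hx₀ x₁)

lemma Dinf_eq_log_div {P Q : X → ℝ} (hQ : ∀ x, 0 < Q x) {x₀ : X} (hx₀ : 0 < P x₀)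
    (hmax : ∀ x, P x / Q x ≤ P x₀ / Q x₀) : Dinf P Q = Real.log (P x₀ / Q x₀) := by
  refine IsGreatest.csSup_eq ⟨⟨x₀, hx₀, rfl⟩, ?_⟩
  rintro v ⟨x, hx, rfl⟩
  exact Real.log_le_log (div_pos hx (hQ x)) (hmax x)

end Dinf

/-- For `α ∈ (1,∞)`,
`sup_{U, P_{U|X}} log ((∑_u P_U(u)^α)^{1/α} / (∑_u Q_U(u)^α)^{1/α}) = D_∞(P‖Q)`. -/
theorem stmt4 {X : Type} [Fintype X]
    (P Q : X → ℝ) (hP : IsPMF P) (hQ : IsPMF Q) (hQpos : ∀ x, 0 < Q x)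
    (α : ℝ) (hα : 1 < α) :
    IsLUB
      {r : ℝ | ∃ (U : Type) (iU : Fintype U) (K : X → U → ℝ),
        @IsChannel X U iU K ∧
        r = Real.log (@alphaNorm U iU α (push P K) / @alphaNorm U iU α (push Q K))}
      (Dinf P Q) := by
  classical
  obtain ⟨x₀, hQP, hmax⟩ := exists_max_div_of_isPMF hP hQ hQpos
  have hPx₀ : 0 < P x₀ := (hQpos x₀).trans_le hQP
  have hc : 0 < P x₀ / Q x₀ := div_pos hPx₀ (hQpos x₀)
  rw [Dinf_eq_log_div hQpos hPx₀ hmax]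
  constructor
  · rintro _ ⟨U, iU, K, hK, rfl⟩
    have hPQ : ∀ x, P x ≤ P x₀ / Q x₀ * Q x := fun x => (div_le_iff₀ (hQpos x)).1 (hmax x)
    have hα0 : 0 < α := by linarith
    exact Real.log_le_log (div_pos (alphaNorm_pos (hP.push hK)) (alphaNorm_pos (hQ.push hK)))
      (alphaNorm_push_div_le hQ hK hc.le hPQ hP.1 hα0)
  · intro b hb
    have hlim := ((tendsto_alphaNorm_push_splitChannel x₀ hP.1 hα).div
      (tendsto_alphaNorm_push_splitChannel x₀ hQ.1 hα) (hQpos x₀).ne').log hc.ne'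
    refine le_of_tendsto hlim ?_
    filter_upwards [eventually_ne_atTop 0] with n hn
    exact hb ⟨_, _, splitChannel x₀ n, isChannel_splitChannel x₀ hn, rfl⟩
end

section
/- Let P and P̃ be pmfs on a finite alphabet 𝒳 with P̃(x)>0 for all x, let α∈(0,1)∪(1,∞), and let k ≥ 1 be a real number. Then the expected α-loss admits the decomposition Σ_x P(x)·(α/(α−1))·(1 − (k·P̃(x))^{(α−1)/α}) = (α/(α−1))·(1 − k^{(α−1)/α}·e^{((1−α)/α)H_α(P)}) + (α/(α−1))·k^{(α−1)/α}·(Σ_x P(x)^α)^{1/α}·(1 − e^{((1−α)/α)·D_{1/α}(P^{(α)}‖P̃)}), where P^{(α)}(x)=P(x)^α/Σ_{x'}P(x')^α is the α-tilted distribution of P. -/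
open Finset

/-!
Writing `S = ∑ P(x)^α` and `A = ∑ P(x) P̃(x)^{(α-1)/α}`, the expected loss is
`(α/(α-1))(1 - k^{(α-1)/α} A)` because `P` sums to one, while both exponentials collapse:
`e^{((1-α)/α) H_α(P)} = S^{1/α}` and, since `(1-α)/α = 1/α - 1`,
`e^{((1-α)/α) D_{1/α}(P^{(α)}‖P̃)} = ∑ (P^α/S)^{1/α} P̃^{1-1/α} = A / S^{1/α}`.
The right-hand side is then `(α/(α-1))(1 - k^{(α-1)/α} S^{1/α} + k^{(α-1)/α} (S^{1/α} - A))`.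
-/

section

variable {X : Type*} [Fintype X]

noncomputable def alphaLoss (α p : ℝ) : ℝ :=
  α / (α - 1) * (1 - p ^ ((α - 1) / α))

noncomputable def renyiEntropy (α : ℝ) (P : X → ℝ) : ℝ :=
  1 / (1 - α) * Real.log (∑ x, P x ^ α)

noncomputable def tilted (α : ℝ) (P : X → ℝ) : X → ℝ :=
  fun x => P x ^ α / ∑ x', P x' ^ α

noncomputable def renyiDiv (β : ℝ) (R S : X → ℝ) : ℝ :=
  1 / (β - 1) * Real.log (∑ x, R x ^ β * S x ^ (1 - β))

theorem IsPMF.exists_pos {P : X → ℝ} (hP : IsPMF P) : ∃ x, 0 < P x := by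
  by_contra! h
  have : ∑ x, P x = 0 := sum_eq_zero fun x _ => le_antisymm (h x) (hP.1 x)
  exact one_ne_zero (hP.2.symm.trans this)

theorem IsPMF.sum_rpow_pos {P : X → ℝ} (hP : IsPMF P) (α : ℝ) :
    0 < ∑ x, P x ^ α := by
  obtain ⟨x₀, hx₀⟩ := hP.exists_pos
  exact sum_pos' (fun x _ => Real.rpow_nonneg (hP.1 x) α)
    ⟨x₀, mem_univ x₀, Real.rpow_pos_of_pos hx₀ α⟩

theorem IsPMF.sum_mul_rpow_pos {P Q : X → ℝ} (hP : IsPMF P) (hQ : ∀ x, 0 < Q x)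
    (e : ℝ) : 0 < ∑ x, P x * Q x ^ e := by
  obtain ⟨x₀, hx₀⟩ := hP.exists_pos
  exact sum_pos' (fun x _ => mul_nonneg (hP.1 x) (Real.rpow_nonneg (hQ x).le e))
    ⟨x₀, mem_univ x₀, mul_pos hx₀ (Real.rpow_pos_of_pos (hQ x₀) e)⟩

theorem sum_mul_alphaLoss_mul {P Q : X → ℝ} (hP : IsPMF P) (hQ : ∀ x, 0 ≤ Q x)
    (α : ℝ) {k : ℝ} (hk : 0 ≤ k) :
    ∑ x, P x * alphaLoss α (k * Q x)
      = α / (α - 1) * (1 - k ^ ((α - 1) / α) * ∑ x, P x * Q x ^ ((α - 1) / α)) := by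
  have hterm (x : X) : P x * alphaLoss α (k * Q x)
      = α / (α - 1) * P x - α / (α - 1) * k ^ ((α - 1) / α) * (P x * Q x ^ ((α - 1) / α)) := by
    rw [alphaLoss, Real.mul_rpow hk (hQ x)]
    ring
  rw [sum_congr rfl fun x _ => hterm x, sum_sub_distrib, ← mul_sum, ← mul_sum, hP.2]
  ring

theorem exp_mul_renyiEntropy {α : ℝ} (hα : α ≠ 1) {P : X → ℝ} (hS : 0 < ∑ x, P x ^ α) :
    Real.exp ((1 - α) / α * renyiEntropy α P) = (∑ x, P x ^ α) ^ (1 / α) := by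
  have h1α : 1 - α ≠ 0 := sub_ne_zero.mpr hα.symm
  rw [Real.rpow_def_of_pos hS, renyiEntropy]
  congr 1
  field_simp

theorem exp_mul_renyiDiv {β : ℝ} (hβ : β ≠ 1) {R S : X → ℝ}
    (h : 0 < ∑ x, R x ^ β * S x ^ (1 - β)) :
    Real.exp ((β - 1) * renyiDiv β R S) = ∑ x, R x ^ β * S x ^ (1 - β) := by
  have hβ1 : β - 1 ≠ 0 := sub_ne_zero.mpr hβ
  rw [renyiDiv, ← mul_assoc, mul_one_div_cancel hβ1, one_mul, Real.exp_log h]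

theorem sum_tilted_rpow_mul_rpow {α : ℝ} (hα : α ≠ 0) {P : X → ℝ} (hP : ∀ x, 0 ≤ P x)
    (Q : X → ℝ) :
    ∑ x, tilted α P x ^ (1 / α) * Q x ^ (1 - 1 / α)
      = (∑ x, P x * Q x ^ ((α - 1) / α)) / (∑ x, P x ^ α) ^ (1 / α) := by
  have hS : 0 ≤ ∑ x, P x ^ α := sum_nonneg fun x _ => Real.rpow_nonneg (hP x) α
  have he : 1 - 1 / α = (α - 1) / α := by field_simp
  rw [sum_div]
  refine sum_congr rfl fun x _ => ?_
  rw [tilted, Real.div_rpow (Real.rpow_nonneg (hP x) α) hS, ← Real.rpow_mul (hP x),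
    mul_one_div_cancel hα, Real.rpow_one, he, div_mul_eq_mul_div]

end

theorem stmt11_general {X : Type} [Fintype X]
    (P Pt : X → ℝ) (hP : IsPMF P) (hPtpos : ∀ x, 0 < Pt x)
    (α : ℝ) (hα0 : 0 < α) (hα1 : α ≠ 1) (k : ℝ) (hk : 1 ≤ k) :
    ∑ x, P x * ((α / (α - 1)) * (1 - (k * Pt x) ^ ((α - 1) / α)))
      = (α / (α - 1)) * (1 - k ^ ((α - 1) / α) *
          Real.exp (((1 - α) / α) * ((1 / (1 - α)) * Real.log (∑ x, P x ^ α))))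
        + (α / (α - 1)) * k ^ ((α - 1) / α) * (∑ x, P x ^ α) ^ (1 / α) *
          (1 - Real.exp (((1 - α) / α) * ((1 / (1 / α - 1)) *
            Real.log (∑ x, (P x ^ α / ∑ x', P x' ^ α) ^ (1 / α) *
              Pt x ^ (1 - 1 / α))))) := by
  change ∑ x, P x * alphaLoss α (k * Pt x)
    = α / (α - 1) * (1 - k ^ ((α - 1) / α) * Real.exp ((1 - α) / α * renyiEntropy α P))
      + α / (α - 1) * k ^ ((α - 1) / α) * (∑ x, P x ^ α) ^ (1 / α) *
        (1 - Real.exp ((1 - α) / α * renyiDiv (1 / α) (tilted α P) Pt))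
  have hS := hP.sum_rpow_pos α
  have hA := hP.sum_mul_rpow_pos hPtpos ((α - 1) / α)
  have hD := sum_tilted_rpow_mul_rpow hα0.ne' hP.1 Pt
  have hβ : (1 - α) / α = 1 / α - 1 := by field_simp
  have hβ1 : 1 / α ≠ 1 := by simpa [one_div] using hα1
  rw [sum_mul_alphaLoss_mul hP (fun x => (hPtpos x).le) α (by linarith),
    exp_mul_renyiEntropy hα1 hS, hβ, exp_mul_renyiDiv hβ1 (hD ▸ by positivity), hD]
  field_simp
  ring

/-- Decomposition of the expected `α`-loss under `k` guesses:
`∑_x P(x) ℓ_α(k P̃(x)) = (α/(α−1))(1 − k^{(α−1)/α} e^{((1−α)/α) H_α(P)})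
  + (α/(α−1)) k^{(α−1)/α} (∑_x P(x)^α)^{1/α} (1 − e^{((1−α)/α) D_{1/α}(P^{(α)} ‖ P̃)})`,
where `H_α(P) = (1/(1−α)) log ∑_x P(x)^α` is the Rényi entropy of order `α`,
`P^{(α)}(x) = P(x)^α / ∑_{x'} P(x')^α` is the tilted distribution, and
`D_β(R‖S) = (1/(β−1)) log ∑_x R(x)^β S(x)^{1−β}` with `β = 1/α`. -/
theorem stmt11 {X : Type} [Fintype X]
    (P Pt : X → ℝ) (hP : IsPMF P) (hPt : IsPMF Pt) (hPtpos : ∀ x, 0 < Pt x)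
    (α : ℝ) (hα0 : 0 < α) (hα1 : α ≠ 1) (k : ℝ) (hk : 1 ≤ k) :
    ∑ x, P x * ((α / (α - 1)) * (1 - (k * Pt x) ^ ((α - 1) / α)))
      = (α / (α - 1)) * (1 - k ^ ((α - 1) / α) *
          Real.exp (((1 - α) / α) * ((1 / (1 - α)) * Real.log (∑ x, P x ^ α))))
        + (α / (α - 1)) * k ^ ((α - 1) / α) * (∑ x, P x ^ α) ^ (1 / α) *
          (1 - Real.exp (((1 - α) / α) * ((1 / (1 / α - 1)) *
            Real.log (∑ x, (P x ^ α / ∑ x', P x' ^ α) ^ (1 / α) *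
              Pt x ^ (1 - 1 / α))))) :=
  stmt11_general P Pt hP hPtpos α hα0 hα1 k hk
end
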